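/- arXiv:1107.5605 — 11 statements merged into one kernel-verified Lean document; each statement's English description precedes it below -/
import Mathlib

section
/- Let n, m be positive integers and let F ∈ ℂ^{n×n}, G ∈ ℂ^{n×m}, H ∈ ℂ^{m×n}, K ∈ ℂ^{m×m}. The following are equivalent: (i) there exist a Hermitian positive definite matrix Θ ∈ ℂ^{n×n}, a matrix Λ ∈ ℂ^{m×n}, a Hermitian matrix M ∈ ℂ^{n×n}, and a matrix S ∈ ℂ^{m×m} with S†S = I such that F = −Θ(iM + (1/2)Λ†Λ), G = −ΘΛ†S, H = Λ, and K = S; (ii) there exists a Hermitian positive definite matrix Θ ∈ ℂ^{n×n} such that FΘ + ΘF† + GG† = 0, G = −ΘH†K, and K†K = I. Moreover, when (ii) holds, (i) is satisfied with M = (i/2)(Θ⁻¹F − F†Θ⁻¹), Λ = H, and S = K. -/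
open Matrix ComplexOrder

theorem physical_realizability_characterization {n m : ℕ} (hn : 0 < n) (hm : 0 < m)
    (F : Matrix (Fin n) (Fin n) ℂ) (G : Matrix (Fin n) (Fin m) ℂ)
    (H : Matrix (Fin m) (Fin n) ℂ) (K : Matrix (Fin m) (Fin m) ℂ) :
    ((∃ (Θ : Matrix (Fin n) (Fin n) ℂ) (Λ : Matrix (Fin m) (Fin n) ℂ)
        (M : Matrix (Fin n) (Fin n) ℂ) (S : Matrix (Fin m) (Fin m) ℂ),
        Θ.PosDef ∧ M.IsHermitian ∧ Sᴴ * S = 1 ∧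
        F = -Θ * (Complex.I • M + (1 / 2 : ℂ) • (Λᴴ * Λ)) ∧
        G = -Θ * Λᴴ * S ∧ H = Λ ∧ K = S) ↔
      (∃ Θ : Matrix (Fin n) (Fin n) ℂ, Θ.PosDef ∧
        F * Θ + Θ * Fᴴ + G * Gᴴ = 0 ∧ G = -Θ * Hᴴ * K ∧ Kᴴ * K = 1)) ∧
    (∀ Θ : Matrix (Fin n) (Fin n) ℂ, Θ.PosDef →
      F * Θ + Θ * Fᴴ + G * Gᴴ = 0 → G = -Θ * Hᴴ * K → Kᴴ * K = 1 →
      (((Complex.I / 2) • (Θ⁻¹ * F - Fᴴ * Θ⁻¹)).IsHermitian ∧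
        F = -Θ * (Complex.I • ((Complex.I / 2) • (Θ⁻¹ * F - Fᴴ * Θ⁻¹))
              + (1 / 2 : ℂ) • (Hᴴ * H)) ∧
        G = -Θ * Hᴴ * K ∧ Kᴴ * K = 1)) := by
  have key : ∀ Θ : Matrix (Fin n) (Fin n) ℂ, Θ.PosDef →
      F * Θ + Θ * Fᴴ + G * Gᴴ = 0 → G = -Θ * Hᴴ * K → Kᴴ * K = 1 →
      (((Complex.I / 2) • (Θ⁻¹ * F - Fᴴ * Θ⁻¹)).IsHermitian ∧
        F = -Θ * (Complex.I • ((Complex.I / 2) • (Θ⁻¹ * F - Fᴴ * Θ⁻¹))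
              + (1 / 2 : ℂ) • (Hᴴ * H)) ∧
        G = -Θ * Hᴴ * K ∧ Kᴴ * K = 1) := by
    intro Θ hΘ hLyap hG hK
    have hdet : IsUnit Θ.det := (Matrix.isUnit_iff_isUnit_det Θ).mp hΘ.isUnit
    have h1 : Θ * Θ⁻¹ = 1 := Matrix.mul_nonsing_inv Θ hdet
    have h2 : Θ⁻¹ * Θ = 1 := Matrix.nonsing_inv_mul Θ hdet
    have hKK : K * Kᴴ = 1 := mul_eq_one_comm.mp hK
    have hinvH : Θ⁻¹ᴴ = Θ⁻¹ := hΘ.isHermitian.inv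
    have hGG : G * Gᴴ = Θ * (Hᴴ * (H * Θ)) := by
      rw [hG]
      simp only [Matrix.conjTranspose_mul, Matrix.conjTranspose_neg,
        Matrix.conjTranspose_conjTranspose, hΘ.isHermitian.eq, Matrix.neg_mul,
        Matrix.mul_neg, neg_neg, Matrix.mul_assoc]
      rw [← Matrix.mul_assoc K, hKK, Matrix.one_mul]
    have hFΘ : F * Θ = -(Θ * Fᴴ + Θ * (Hᴴ * (H * Θ))) := by
      rw [hGG, add_assoc] at hLyap
      exact add_eq_zero_iff_eq_neg.mp hLyap
    have hinvF : Θ⁻¹ * F = -(Fᴴ * Θ⁻¹ + Hᴴ * H) := by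
      have h4 : Θ⁻¹ * F = Θ⁻¹ * (F * Θ) * Θ⁻¹ := by
        rw [← Matrix.mul_assoc, Matrix.mul_nonsing_inv_cancel_right _ _ hdet]
      rw [h4, hFΘ, Matrix.mul_neg, Matrix.neg_mul, Matrix.mul_add, Matrix.add_mul,
        ← Matrix.mul_assoc Θ⁻¹ Θ Fᴴ, h2, Matrix.one_mul,
        ← Matrix.mul_assoc Θ⁻¹ Θ (Hᴴ * (H * Θ)), h2, Matrix.one_mul,
        Matrix.mul_assoc Hᴴ (H * Θ) Θ⁻¹, Matrix.mul_assoc H Θ Θ⁻¹, h1, Matrix.mul_one]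
    have hM : (((Complex.I / 2) • (Θ⁻¹ * F - Fᴴ * Θ⁻¹))).IsHermitian := by
      show _ = _
      rw [Matrix.conjTranspose_smul, Matrix.conjTranspose_sub, Matrix.conjTranspose_mul,
        Matrix.conjTranspose_mul, Matrix.conjTranspose_conjTranspose, hinvH]
      rw [show star (Complex.I / 2) = -(Complex.I / 2) by
        rw [Complex.star_def, map_div₀, Complex.conj_I, Complex.conj_ofNat]; ring]
      rw [neg_smul, smul_sub, smul_sub, neg_sub]
    refine ⟨hM, ?_, hG, hK⟩
    have hFid : F = Θ * (Θ⁻¹ * F) := by rw [← Matrix.mul_assoc, h1, Matrix.one_mul]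
    rw [smul_smul, show Complex.I * (Complex.I / 2) = -(1/2 : ℂ) by
      linear_combination Complex.I_mul_I / 2]
    conv_lhs => rw [hFid, hinvF]
    rw [hinvF]
    simp only [Matrix.mul_add, Matrix.mul_sub, Matrix.mul_neg, Matrix.neg_mul,
      Matrix.mul_smul, smul_sub, smul_add, smul_neg, neg_smul, neg_neg, neg_sub]
    module
  refine ⟨⟨?_, ?_⟩, key⟩
  · rintro ⟨Θ, Λ, M, S, hΘ, hM, hS, hF, hG, rfl, rfl⟩
    refine ⟨Θ, hΘ, ?_, hG, hS⟩
    have hSS : K * Kᴴ = 1 := mul_eq_one_comm.mp hS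
    have hGG : G * Gᴴ = Θ * ((Hᴴ * H) * Θ) := by
      rw [hG]
      simp only [Matrix.conjTranspose_mul, Matrix.conjTranspose_neg,
        Matrix.conjTranspose_conjTranspose, hΘ.isHermitian.eq, Matrix.neg_mul,
        Matrix.mul_neg, neg_neg, Matrix.mul_assoc]
      rw [← Matrix.mul_assoc K, hSS, Matrix.one_mul]
    rw [hGG, hF]
    have hFH : (-Θ * (Complex.I • M + (1 / 2 : ℂ) • (Hᴴ * H)))ᴴ
        = ((-Complex.I) • M + (1 / 2 : ℂ) • (Hᴴ * H)) * (-Θ) := by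
      rw [Matrix.conjTranspose_mul, Matrix.conjTranspose_neg, hΘ.isHermitian.eq,
        Matrix.conjTranspose_add, Matrix.conjTranspose_smul, Matrix.conjTranspose_smul,
        Matrix.conjTranspose_mul, Matrix.conjTranspose_conjTranspose, hM.eq]
      congr 2
      · rw [show star Complex.I = -Complex.I by
          rw [Complex.star_def, Complex.conj_I]]
      · rw [show star ((1:ℂ)/2) = (1:ℂ)/2 by
          rw [Complex.star_def, map_div₀, RingHom.map_one, Complex.conj_ofNat]]
    rw [hFH]
    simp only [Matrix.neg_mul, Matrix.mul_neg, Matrix.add_mul, Matrix.mul_add,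
      Matrix.mul_smul, Matrix.smul_mul, smul_add, smul_neg, neg_smul, neg_neg,
      Matrix.mul_assoc]
    module
  · rintro ⟨Θ, hΘ, hLyap, hG, hK⟩
    obtain ⟨hMH, hF, hG', hK'⟩ := key Θ hΘ hLyap hG hK
    exact ⟨Θ, H, (Complex.I / 2) • (Θ⁻¹ * F - Fᴴ * Θ⁻¹), K, hΘ, hMH, hK', hF, hG', rfl, rfl⟩
end

section
/- Let F ∈ ℂ^{n×n}, G ∈ ℂ^{n×m}, H ∈ ℂ^{m×n}, K ∈ ℂ^{m×m}, and suppose Θ ∈ ℂ^{n×n} is Hermitian positive definite (in particular invertible) and satisfies FΘ + ΘF† + GG† = 0, G = −ΘH†K, and K†K = I. Then, with M := (i/2)(Θ⁻¹F − F†Θ⁻¹), the matrix M is Hermitian and F = −Θ(iM + (1/2)H†H). -/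
open Matrix ComplexOrder

theorem hamiltonian_recovery {n m : ℕ}
    (F : Matrix (Fin n) (Fin n) ℂ) (G : Matrix (Fin n) (Fin m) ℂ)
    (H : Matrix (Fin m) (Fin n) ℂ) (K : Matrix (Fin m) (Fin m) ℂ)
    (Θ : Matrix (Fin n) (Fin n) ℂ) (hΘ : Θ.PosDef)
    (h1 : F * Θ + Θ * Fᴴ + G * Gᴴ = 0)
    (h2 : G = -Θ * Hᴴ * K)
    (h3 : Kᴴ * K = 1) :
    (((Complex.I / 2) • (Θ⁻¹ * F - Fᴴ * Θ⁻¹)).IsHermitian) ∧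
    F = -Θ * (Complex.I • ((Complex.I / 2) • (Θ⁻¹ * F - Fᴴ * Θ⁻¹))
          + (1 / 2 : ℂ) • (Hᴴ * H)) := by
  have hΘH : Θᴴ = Θ := hΘ.1
  have hdet : IsUnit Θ.det := (Matrix.isUnit_iff_isUnit_det _).mp hΘ.isUnit
  have hΘinvH : Θ⁻¹ᴴ = Θ⁻¹ := hΘ.1.inv
  have hmul : Θ * Θ⁻¹ = 1 := mul_nonsing_inv _ hdet
  have hmul' : Θ⁻¹ * Θ = 1 := nonsing_inv_mul _ hdet
  have hK : K * Kᴴ = 1 := mul_eq_one_comm.mp h3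
  have hGG : G * Gᴴ = Θ * Hᴴ * H * Θ := by
    rw [h2]
    simp only [conjTranspose_mul, conjTranspose_neg, hΘH, conjTranspose_conjTranspose]
    simp only [Matrix.mul_neg, Matrix.neg_mul, neg_neg, Matrix.mul_assoc]
    rw [← Matrix.mul_assoc K, hK, Matrix.one_mul]
  have hkey : Θ * Fᴴ * Θ⁻¹ = -F - Θ * (Hᴴ * H) := by
    have h1' : F * Θ + Θ * Fᴴ + Θ * Hᴴ * H * Θ = 0 := by rw [← hGG]; exact h1
    have : (F * Θ + Θ * Fᴴ + Θ * Hᴴ * H * Θ) * Θ⁻¹ = 0 := by rw [h1']; simp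
    have e : F + Θ * Fᴴ * Θ⁻¹ + Θ * Hᴴ * H = 0 := by
      calc F + Θ * Fᴴ * Θ⁻¹ + Θ * Hᴴ * H
          = (F * Θ + Θ * Fᴴ + Θ * Hᴴ * H * Θ) * Θ⁻¹ := by
            simp [Matrix.add_mul, Matrix.mul_assoc, hmul]
        _ = 0 := this
    have e2 : Θ * Fᴴ * Θ⁻¹ + (F + Θ * Hᴴ * H) = 0 := by rw [← e]; abel
    have e3 := eq_neg_of_add_eq_zero_left e2
    rw [e3, Matrix.mul_assoc]
    abel
  constructor
  · unfold Matrix.IsHermitian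
    rw [conjTranspose_smul, conjTranspose_sub, conjTranspose_mul,
      conjTranspose_mul, conjTranspose_conjTranspose, hΘinvH]
    rw [show star (Complex.I / 2) = -(Complex.I / 2) from by
      simp [Complex.star_def, map_div₀, Complex.conj_I, neg_div]]
    rw [neg_smul, ← smul_neg, neg_sub]
  · have e1 : Complex.I • ((Complex.I / 2) • (Θ⁻¹ * F - Fᴴ * Θ⁻¹))
        = (-(1/2) : ℂ) • (Θ⁻¹ * F - Fᴴ * Θ⁻¹) := by
      rw [smul_smul]
      norm_num [Complex.I_mul_I, mul_div_assoc, Complex.I_mul_I]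
      rw [show Complex.I * (Complex.I / 2) = (Complex.I * Complex.I) / 2 by ring]
      simp [Complex.I_mul_I]
      norm_num
    rw [e1]
    rw [Matrix.neg_mul, Matrix.mul_add, Matrix.mul_smul, Matrix.mul_smul]
    have e2 : Θ * (Θ⁻¹ * F - Fᴴ * Θ⁻¹) = F - (-F - Θ * (Hᴴ * H)) := by
      rw [Matrix.mul_sub, ← Matrix.mul_assoc, hmul, Matrix.one_mul,
        ← Matrix.mul_assoc, hkey]
    rw [e2]
    have : F - (-F - Θ * (Hᴴ * H)) = (2:ℂ) • F + Θ * (Hᴴ * H) := by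
      rw [two_smul]; abel
    rw [this]
    rw [smul_add, smul_smul]
    norm_num
end

section
/- Let Λ1 ∈ ℂ^{m×n1}, Λ2 ∈ ℂ^{m×n2}, let M11 ∈ ℂ^{n1×n1} and M22 ∈ ℂ^{n2×n2} be Hermitian, let M12 ∈ ℂ^{n1×n2}, and let S ∈ ℂ^{m×m} satisfy S†S = I. Suppose the matrix (1/2)Λ2†Λ2 + iM22 is invertible. Define F11 = −((1/2)Λ1†Λ1 + iM11), F12 = −((1/2)Λ1†Λ2 + iM12), F21 = −((1/2)Λ2†Λ1 + iM12†), F22 = −((1/2)Λ2†Λ2 + iM22), G1 = −Λ1†S, G2 = −Λ2†S, H1 = Λ1, H2 = Λ2, K = S, and define the reduced system F0 = F11 − F12F22⁻¹F21, G0 = G1 − F12F22⁻¹G2, H0 = H1 − H2F22⁻¹F21, K0 = K − H2F22⁻¹G2. Then the reduced system (F0, G0, H0, K0) is physically realizable; in fact Θ = I satisfies F0 + F0† + G0G0† = 0, G0 = −H0†K0, and K0†K0 = I. -/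
open Matrix ComplexOrder

lemma aux1 {n1 n2 m : ℕ}
    (F11 : Matrix (Fin n1) (Fin n1) ℂ) (F12 : Matrix (Fin n1) (Fin n2) ℂ)
    (F21 : Matrix (Fin n2) (Fin n1) ℂ) (F22 : Matrix (Fin n2) (Fin n2) ℂ)
    (G1 : Matrix (Fin n1) (Fin m) ℂ) (G2 : Matrix (Fin n2) (Fin m) ℂ)
    (X : Matrix (Fin n2) (Fin n2) ℂ)
    (h11 : F11 + F11ᴴ + G1 * G1ᴴ = 0)
    (h22 : F22 + F22ᴴ + G2 * G2ᴴ = 0)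
    (h12 : F12 + F21ᴴ + G1 * G2ᴴ = 0)
    (hXl : X * F22 = 1) (hXr : F22 * X = 1) :
    (F11 - F12 * X * F21) + (F11 - F12 * X * F21)ᴴ
      + (G1 - F12 * X * G2) * (G1 - F12 * X * G2)ᴴ = 0 := by
  have c1 : ∀ {p : Type} [Fintype p] (B : Matrix (Fin n2) p ℂ), X * (F22 * B) = B := by
    intro p _ B; rw [← Matrix.mul_assoc, hXl, Matrix.one_mul]
  have c2 : ∀ {p : Type} [Fintype p] (B : Matrix (Fin n2) p ℂ), F22 * (X * B) = B := by
    intro p _ B; rw [← Matrix.mul_assoc, hXr, Matrix.one_mul]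
  have hXF : F22ᴴ * Xᴴ = 1 := by rw [← conjTranspose_mul, hXl, conjTranspose_one]
  have c4 : ∀ {p : Type} [Fintype p] (B : Matrix (Fin n2) p ℂ), F22ᴴ * (Xᴴ * B) = B := by
    intro p _ B; rw [← Matrix.mul_assoc, hXF, Matrix.one_mul]
  have hF21 : F21 = -F12ᴴ - G2 * G1ᴴ := by
    have := congrArg conjTranspose h12
    simp only [conjTranspose_add, conjTranspose_mul, conjTranspose_conjTranspose,
      conjTranspose_zero] at this
    linear_combination (norm := abel) this
  have hG11 : G1 * G1ᴴ = -F11 - F11ᴴ := by linear_combination (norm := abel) h11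
  have hG22 : G2 * G2ᴴ = -F22 - F22ᴴ := by linear_combination (norm := abel) h22
  have c5 : ∀ {p : Type} [Fintype p] (B : Matrix (Fin n2) p ℂ),
      G2 * (G2ᴴ * B) = -(F22 * B) - F22ᴴ * B := by
    intro p _ B
    rw [← Matrix.mul_assoc, hG22, Matrix.sub_mul, Matrix.neg_mul]
  rw [hF21]
  simp only [conjTranspose_sub, conjTranspose_neg, conjTranspose_mul,
    conjTranspose_conjTranspose, Matrix.mul_sub, Matrix.sub_mul, Matrix.mul_add,
    Matrix.add_mul, Matrix.mul_neg, Matrix.neg_mul, Matrix.mul_assoc, hG11, hG22,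
    c1, c2, c4, c5]
  abel

lemma aux2 {n1 n2 m : ℕ}
    (F12 : Matrix (Fin n1) (Fin n2) ℂ) (F21 : Matrix (Fin n2) (Fin n1) ℂ)
    (F22 : Matrix (Fin n2) (Fin n2) ℂ)
    (G1 : Matrix (Fin n1) (Fin m) ℂ) (G2 : Matrix (Fin n2) (Fin m) ℂ)
    (H1 : Matrix (Fin m) (Fin n1) ℂ) (H2 : Matrix (Fin m) (Fin n2) ℂ)
    (K : Matrix (Fin m) (Fin m) ℂ) (X : Matrix (Fin n2) (Fin n2) ℂ)
    (hH1K : H1ᴴ * K = -G1) (hH2K : H2ᴴ * K = -G2)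
    (hH12 : H1ᴴ * H2 = -F12 - F21ᴴ) (hH22 : H2ᴴ * H2 = -F22 - F22ᴴ)
    (hXr : F22 * X = 1) :
    G1 - F12 * X * G2 = -((H1 - H2 * X * F21)ᴴ * (K - H2 * X * G2)) := by
  have c2 : ∀ {p : Type} [Fintype p] (B : Matrix (Fin n2) p ℂ), F22 * (X * B) = B := by
    intro p _ B; rw [← Matrix.mul_assoc, hXr, Matrix.one_mul]
  have hXF : Xᴴ * F22ᴴ = 1 := by rw [← conjTranspose_mul, hXr, conjTranspose_one]
  have c3 : ∀ {p : Type} [Fintype p] (B : Matrix (Fin n2) p ℂ), Xᴴ * (F22ᴴ * B) = B := by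
    intro p _ B; rw [← Matrix.mul_assoc, hXF, Matrix.one_mul]
  have c6 : ∀ {p : Type} [Fintype p] (B : Matrix (Fin n2) p ℂ),
      Xᴴ * (H2ᴴ * (H2 * (X * B))) = -(Xᴴ * B) - X * B := by
    intro p _ B
    rw [show H2ᴴ * (H2 * (X * B)) = (H2ᴴ * H2) * (X * B) from (Matrix.mul_assoc _ _ _).symm,
      hH22, Matrix.sub_mul, Matrix.neg_mul, c2, Matrix.mul_sub, Matrix.mul_neg, c3]
  have c7 : ∀ {p : Type} [Fintype p] (B : Matrix (Fin n2) p ℂ),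
      H1ᴴ * (H2 * B) = -(F12 * B) - F21ᴴ * B := by
    intro p _ B
    rw [← Matrix.mul_assoc, hH12, Matrix.sub_mul, Matrix.neg_mul]
  simp only [conjTranspose_sub, conjTranspose_mul, conjTranspose_conjTranspose,
    Matrix.mul_sub, Matrix.sub_mul, Matrix.mul_neg, Matrix.neg_mul, Matrix.mul_assoc,
    hH1K, hH2K, c6, c7]
  abel

lemma aux3 {n2 m : ℕ}
    (F22 : Matrix (Fin n2) (Fin n2) ℂ) (G2 : Matrix (Fin n2) (Fin m) ℂ)
    (H2 : Matrix (Fin m) (Fin n2) ℂ) (K : Matrix (Fin m) (Fin m) ℂ)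
    (X : Matrix (Fin n2) (Fin n2) ℂ)
    (hKK : Kᴴ * K = 1) (hH2K : H2ᴴ * K = -G2)
    (hH22 : H2ᴴ * H2 = -F22 - F22ᴴ) (hXr : F22 * X = 1) :
    (K - H2 * X * G2)ᴴ * (K - H2 * X * G2) = 1 := by
  have c2 : ∀ {p : Type} [Fintype p] (B : Matrix (Fin n2) p ℂ), F22 * (X * B) = B := by
    intro p _ B; rw [← Matrix.mul_assoc, hXr, Matrix.one_mul]
  have hXF : Xᴴ * F22ᴴ = 1 := by rw [← conjTranspose_mul, hXr, conjTranspose_one]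
  have c3 : ∀ {p : Type} [Fintype p] (B : Matrix (Fin n2) p ℂ), Xᴴ * (F22ᴴ * B) = B := by
    intro p _ B; rw [← Matrix.mul_assoc, hXF, Matrix.one_mul]
  have c6 : ∀ {p : Type} [Fintype p] (B : Matrix (Fin n2) p ℂ),
      Xᴴ * (H2ᴴ * (H2 * (X * B))) = -(Xᴴ * B) - X * B := by
    intro p _ B
    rw [show H2ᴴ * (H2 * (X * B)) = (H2ᴴ * H2) * (X * B) from (Matrix.mul_assoc _ _ _).symm,
      hH22, Matrix.sub_mul, Matrix.neg_mul, c2, Matrix.mul_sub, Matrix.mul_neg, c3]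
  have c8 : ∀ {p : Type} [Fintype p] (B : Matrix (Fin n2) p ℂ),
      Kᴴ * (H2 * B) = -(G2ᴴ * B) := by
    intro p _ B
    have : Kᴴ * H2 = -G2ᴴ := by
      have := congrArg conjTranspose hH2K
      simpa [conjTranspose_mul] using this
    rw [← Matrix.mul_assoc, this, Matrix.neg_mul]
  simp only [conjTranspose_sub, conjTranspose_mul, conjTranspose_conjTranspose,
    Matrix.mul_sub, Matrix.sub_mul, Matrix.mul_neg, Matrix.neg_mul, Matrix.mul_assoc,
    hKK, hH2K, c6, c8]
  abel


theorem special_singular_perturbation_physically_realizable {n1 n2 m : ℕ}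
    (Λ1 : Matrix (Fin m) (Fin n1) ℂ) (Λ2 : Matrix (Fin m) (Fin n2) ℂ)
    (M11 : Matrix (Fin n1) (Fin n1) ℂ) (M22 : Matrix (Fin n2) (Fin n2) ℂ)
    (M12 : Matrix (Fin n1) (Fin n2) ℂ) (S : Matrix (Fin m) (Fin m) ℂ)
    (hM11 : M11.IsHermitian) (hM22 : M22.IsHermitian) (hS : Sᴴ * S = 1)
    (hinv : IsUnit ((1 / 2 : ℂ) • (Λ2ᴴ * Λ2) + Complex.I • M22))
    (F11 : Matrix (Fin n1) (Fin n1) ℂ) (F12 : Matrix (Fin n1) (Fin n2) ℂ)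
    (F21 : Matrix (Fin n2) (Fin n1) ℂ) (F22 : Matrix (Fin n2) (Fin n2) ℂ)
    (G1 : Matrix (Fin n1) (Fin m) ℂ) (G2 : Matrix (Fin n2) (Fin m) ℂ)
    (H1 : Matrix (Fin m) (Fin n1) ℂ) (H2 : Matrix (Fin m) (Fin n2) ℂ)
    (K : Matrix (Fin m) (Fin m) ℂ)
    (hF11 : F11 = -((1 / 2 : ℂ) • (Λ1ᴴ * Λ1) + Complex.I • M11))
    (hF12 : F12 = -((1 / 2 : ℂ) • (Λ1ᴴ * Λ2) + Complex.I • M12))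
    (hF21 : F21 = -((1 / 2 : ℂ) • (Λ2ᴴ * Λ1) + Complex.I • M12ᴴ))
    (hF22 : F22 = -((1 / 2 : ℂ) • (Λ2ᴴ * Λ2) + Complex.I • M22))
    (hG1 : G1 = -(Λ1ᴴ * S)) (hG2 : G2 = -(Λ2ᴴ * S))
    (hH1 : H1 = Λ1) (hH2 : H2 = Λ2) (hK : K = S)
    (F0 : Matrix (Fin n1) (Fin n1) ℂ) (G0 : Matrix (Fin n1) (Fin m) ℂ)
    (H0 : Matrix (Fin m) (Fin n1) ℂ) (K0 : Matrix (Fin m) (Fin m) ℂ)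
    (hF0 : F0 = F11 - F12 * F22⁻¹ * F21)
    (hG0 : G0 = G1 - F12 * F22⁻¹ * G2)
    (hH0 : H0 = H1 - H2 * F22⁻¹ * F21)
    (hK0 : K0 = K - H2 * F22⁻¹ * G2) :
    (∃ Θ : Matrix (Fin n1) (Fin n1) ℂ, Θ.PosDef ∧
      F0 * Θ + Θ * F0ᴴ + G0 * G0ᴴ = 0 ∧ G0 = -Θ * H0ᴴ * K0 ∧ K0ᴴ * K0 = 1) ∧
    (F0 + F0ᴴ + G0 * G0ᴴ = 0 ∧ G0 = -(H0ᴴ * K0) ∧ K0ᴴ * K0 = 1) := by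
  have hSS' : S * Sᴴ = 1 := mul_eq_one_comm.mp hS
  have cS : ∀ {p : Type} [Fintype p] (B : Matrix (Fin m) p ℂ), S * (Sᴴ * B) = B := by
    intro p _ B; rw [← Matrix.mul_assoc, hSS', Matrix.one_mul]
  have hu : IsUnit F22 := by rw [hF22]; exact hinv.neg
  have hdet : IsUnit F22.det := (Matrix.isUnit_iff_isUnit_det F22).mp hu
  have hXl : F22⁻¹ * F22 = 1 := Matrix.nonsing_inv_mul F22 hdet
  have hXr : F22 * F22⁻¹ = 1 := Matrix.mul_nonsing_inv F22 hdet
  have h11 : F11 + F11ᴴ + G1 * G1ᴴ = 0 := by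
    rw [hF11, hG1]
    simp only [conjTranspose_neg, conjTranspose_add, conjTranspose_smul, conjTranspose_mul,
      conjTranspose_conjTranspose, hM11.eq, Complex.conj_I, Matrix.neg_mul, Matrix.mul_neg,
      neg_neg, Matrix.mul_assoc, cS, map_div₀, _root_.map_one, _root_.map_ofNat, RCLike.star_def]
    module
  have h22 : F22 + F22ᴴ + G2 * G2ᴴ = 0 := by
    rw [hF22, hG2]
    simp only [conjTranspose_neg, conjTranspose_add, conjTranspose_smul, conjTranspose_mul,
      conjTranspose_conjTranspose, hM22.eq, Complex.conj_I, Matrix.neg_mul, Matrix.mul_neg,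
      neg_neg, Matrix.mul_assoc, cS, map_div₀, _root_.map_one, _root_.map_ofNat, RCLike.star_def]
    module
  have h12 : F12 + F21ᴴ + G1 * G2ᴴ = 0 := by
    rw [hF12, hF21, hG1, hG2]
    simp only [conjTranspose_neg, conjTranspose_add, conjTranspose_smul, conjTranspose_mul,
      conjTranspose_conjTranspose, Complex.conj_I, Matrix.neg_mul, Matrix.mul_neg,
      neg_neg, Matrix.mul_assoc, cS, map_div₀, _root_.map_one, _root_.map_ofNat, RCLike.star_def]
    module
  have hH1K : H1ᴴ * K = -G1 := by rw [hH1, hK, hG1, neg_neg]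
  have hH2K : H2ᴴ * K = -G2 := by rw [hH2, hK, hG2, neg_neg]
  have hH12 : H1ᴴ * H2 = -F12 - F21ᴴ := by
    have : G1 * G2ᴴ = H1ᴴ * H2 := by
      rw [hG1, hG2, hH1, hH2]
      simp only [conjTranspose_neg, conjTranspose_mul, conjTranspose_conjTranspose,
        Matrix.neg_mul, Matrix.mul_neg, neg_neg, Matrix.mul_assoc, cS]
    rw [← this]
    linear_combination (norm := abel) h12
  have hH22 : H2ᴴ * H2 = -F22 - F22ᴴ := by
    have : G2 * G2ᴴ = H2ᴴ * H2 := by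
      rw [hG2, hH2]
      simp only [conjTranspose_neg, conjTranspose_mul, conjTranspose_conjTranspose,
        Matrix.neg_mul, Matrix.mul_neg, neg_neg, Matrix.mul_assoc, cS]
    rw [← this]
    linear_combination (norm := abel) h22
  have hKK : Kᴴ * K = 1 := by rw [hK]; exact hS
  subst hF0 hG0 hH0 hK0
  have e1 := aux1 F11 F12 F21 F22 G1 G2 F22⁻¹ h11 h22 h12 hXl hXr
  have e2 := aux2 F12 F21 F22 G1 G2 H1 H2 K F22⁻¹ hH1K hH2K hH12 hH22 hXr
  have e3 := aux3 F22 G2 H2 K F22⁻¹ hKK hH2K hH22 hXr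
  refine ⟨⟨1, Matrix.PosDef.one, ?_, ?_, e3⟩, e1, e2, e3⟩
  · simpa using e1
  · rw [Matrix.neg_mul, Matrix.one_mul, Matrix.neg_mul]; exact e2
end

section
/- Let Λ2 ∈ ℂ^{m×n2} and let M22 ∈ ℂ^{n2×n2} be Hermitian, and suppose B := (1/2)Λ2†Λ2 + iM22 is invertible. Then the matrix T := I − Λ2B⁻¹Λ2† ∈ ℂ^{m×m} satisfies T†T = I. Consequently, for any S ∈ ℂ^{m×m} with S†S = I, the matrix S̃ := S − Λ2B⁻¹Λ2†S satisfies S̃†S̃ = I. -/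
open Matrix

theorem reduced_scattering_unitary {n2 m : ℕ}
    (Λ2 : Matrix (Fin m) (Fin n2) ℂ) (M22 : Matrix (Fin n2) (Fin n2) ℂ)
    (hM22 : M22.IsHermitian)
    (hB : IsUnit ((1 / 2 : ℂ) • (Λ2ᴴ * Λ2) + Complex.I • M22)) :
    ((1 : Matrix (Fin m) (Fin m) ℂ)
        - Λ2 * ((1 / 2 : ℂ) • (Λ2ᴴ * Λ2) + Complex.I • M22)⁻¹ * Λ2ᴴ)ᴴ *
      ((1 : Matrix (Fin m) (Fin m) ℂ)
        - Λ2 * ((1 / 2 : ℂ) • (Λ2ᴴ * Λ2) + Complex.I • M22)⁻¹ * Λ2ᴴ) = 1 ∧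
    ∀ S : Matrix (Fin m) (Fin m) ℂ, Sᴴ * S = 1 →
      (S - Λ2 * ((1 / 2 : ℂ) • (Λ2ᴴ * Λ2) + Complex.I • M22)⁻¹ * Λ2ᴴ * S)ᴴ *
        (S - Λ2 * ((1 / 2 : ℂ) • (Λ2ᴴ * Λ2) + Complex.I • M22)⁻¹ * Λ2ᴴ * S) = 1 := by
  set B := (1 / 2 : ℂ) • (Λ2ᴴ * Λ2) + Complex.I • M22 with hBdef
  have hdet : IsUnit B.det := (Matrix.isUnit_iff_isUnit_det B).mp hB
  have hBinv : B⁻¹ * B = 1 := Matrix.nonsing_inv_mul B hdet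
  have hBinv' : B * B⁻¹ = 1 := Matrix.mul_nonsing_inv B hdet
  have hBH : Bᴴ + B = Λ2ᴴ * Λ2 := by
    have h1 : Bᴴ = (1 / 2 : ℂ) • (Λ2ᴴ * Λ2) - Complex.I • M22 := by
      simp [hBdef, Matrix.conjTranspose_add, Matrix.conjTranspose_smul, hM22.eq,
        Complex.conj_I, neg_smul, sub_eq_add_neg]
    rw [h1, hBdef]
    module
  have h1 : Bᴴ * B⁻¹ᴴ = 1 := by
    rw [← Matrix.conjTranspose_mul, hBinv, Matrix.conjTranspose_one]
  have h2 : B⁻¹ᴴ * Bᴴ = 1 := by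
    rw [← Matrix.conjTranspose_mul, hBinv', Matrix.conjTranspose_one]
  set X := Λ2 * B⁻¹ * Λ2ᴴ with hXdef
  have hXH : Xᴴ = Λ2 * B⁻¹ᴴ * Λ2ᴴ := by
    simp [hXdef, Matrix.conjTranspose_mul, Matrix.mul_assoc]
  have hXX : Xᴴ * X = X + Xᴴ := by
    rw [hXH, hXdef]
    calc Λ2 * B⁻¹ᴴ * Λ2ᴴ * (Λ2 * B⁻¹ * Λ2ᴴ)
        = Λ2 * (B⁻¹ᴴ * (Λ2ᴴ * Λ2) * B⁻¹) * Λ2ᴴ := by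
          simp only [Matrix.mul_assoc]
      _ = Λ2 * (B⁻¹ᴴ * (Bᴴ + B) * B⁻¹) * Λ2ᴴ := by rw [hBH]
      _ = Λ2 * ((B⁻¹ᴴ * Bᴴ) * B⁻¹ + B⁻¹ᴴ * (B * B⁻¹)) * Λ2ᴴ := by
          rw [Matrix.mul_add, Matrix.add_mul]
          simp only [Matrix.mul_assoc]
      _ = Λ2 * B⁻¹ * Λ2ᴴ + Λ2 * B⁻¹ᴴ * Λ2ᴴ := by
          rw [h2, hBinv', Matrix.one_mul, Matrix.mul_one, Matrix.mul_add,
            Matrix.add_mul]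
  have hT : ((1 : Matrix (Fin m) (Fin m) ℂ) - X)ᴴ * (1 - X) = 1 := by
    rw [Matrix.conjTranspose_sub, Matrix.conjTranspose_one, Matrix.sub_mul,
      Matrix.mul_sub, Matrix.mul_sub, Matrix.one_mul, Matrix.mul_one,
      Matrix.one_mul, hXX]
    abel
  refine ⟨hT, fun S hS => ?_⟩
  have hfact : S - X * S = (1 - X) * S := by
    rw [Matrix.sub_mul, Matrix.one_mul]
  calc (S - X * S)ᴴ * (S - X * S)
      = Sᴴ * (((1 - X)ᴴ * (1 - X)) * S) := by
        rw [hfact, Matrix.conjTranspose_mul]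
        simp only [Matrix.mul_assoc]
    _ = 1 := by rw [hT, Matrix.one_mul, hS]
end

section
/- Let Λ1 ∈ ℂ^{m×n1}, Λ2 ∈ ℂ^{m×n2}, M12 ∈ ℂ^{n1×n2}, let M22 ∈ ℂ^{n2×n2} be Hermitian, let S ∈ ℂ^{m×m} satisfy S†S = I, and suppose F22 := −((1/2)Λ2†Λ2 + iM22) is invertible. With F12 = −((1/2)Λ1†Λ2 + iM12), F21 = −((1/2)Λ2†Λ1 + iM12†), G1 = −Λ1†S, G2 = −Λ2†S, H1 = Λ1, H2 = Λ2, K = S, define G0 = G1 − F12F22⁻¹G2, H0 = H1 − H2F22⁻¹F21, K0 = K − H2F22⁻¹G2. Then G0 = −H0†K0. -/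
open Matrix

lemma key_aux {n1 n2 m : ℕ}
    (Λ1 : Matrix (Fin m) (Fin n1) ℂ) (Λ2 : Matrix (Fin m) (Fin n2) ℂ)
    (S : Matrix (Fin m) (Fin m) ℂ)
    (F12 : Matrix (Fin n1) (Fin n2) ℂ) (F21 : Matrix (Fin n2) (Fin n1) ℂ)
    (F22 : Matrix (Fin n2) (Fin n2) ℂ)
    (hU : IsUnit F22)
    (hP : Λ1ᴴ * Λ2 = -(F12 + F21ᴴ))
    (hQ : Λ2ᴴ * Λ2 = -(F22 + F22ᴴ)) :
    -(Λ1ᴴ * S) - F12 * F22⁻¹ * (-(Λ2ᴴ * S)) =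
      -((Λ1 - Λ2 * F22⁻¹ * F21)ᴴ * (S - Λ2 * F22⁻¹ * (-(Λ2ᴴ * S)))) := by
  have hdet : IsUnit F22.det := (Matrix.isUnit_iff_isUnit_det F22).mp hU
  have h1 : F22 * F22⁻¹ = 1 := Matrix.mul_nonsing_inv _ hdet
  have h2 : F22⁻¹ * F22 = 1 := Matrix.nonsing_inv_mul _ hdet
  have hXH : (F22⁻¹)ᴴ = (F22ᴴ)⁻¹ := Matrix.conjTranspose_nonsing_inv F22
  have hdetH : IsUnit F22ᴴ.det := by rw [Matrix.det_conjTranspose]; exact hdet.star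
  have h3 : F22ᴴ * (F22⁻¹)ᴴ = 1 := by rw [hXH]; exact Matrix.mul_nonsing_inv _ hdetH
  have h4 : (F22⁻¹)ᴴ * F22ᴴ = 1 := by rw [hXH]; exact Matrix.nonsing_inv_mul _ hdetH
  set X := F22⁻¹ with hX
  have hkey : Xᴴ * (Λ2ᴴ * Λ2) * X = -(Xᴴ + X) := by
    rw [hQ]
    calc Xᴴ * -(F22 + F22ᴴ) * X
        = -((Xᴴ * F22ᴴ) * X + Xᴴ * (F22 * X)) := by noncomm_ring
      _ = -(Xᴴ + X) := by rw [h4, h1]; simp [add_comm]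
  -- now expand
  have expand : (Λ1 - Λ2 * X * F21)ᴴ = Λ1ᴴ - F21ᴴ * (Xᴴ * Λ2ᴴ) := by
    simp [Matrix.conjTranspose_mul, Matrix.mul_assoc]
  rw [expand]
  have : (Λ1ᴴ - F21ᴴ * (Xᴴ * Λ2ᴴ)) * (S - Λ2 * X * -(Λ2ᴴ * S))
      = Λ1ᴴ * S + (Λ1ᴴ * Λ2) * (X * (Λ2ᴴ * S)) - F21ᴴ * ((Xᴴ * Λ2ᴴ) * S)
        - F21ᴴ * ((Xᴴ * (Λ2ᴴ * Λ2) * X) * (Λ2ᴴ * S)) := by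
    simp only [Matrix.mul_sub, Matrix.sub_mul, Matrix.mul_add, Matrix.add_mul, Matrix.mul_neg, Matrix.neg_mul, Matrix.mul_assoc, neg_neg, neg_add, sub_eq_add_neg]; abel
  rw [this, hP, hkey]
  simp only [Matrix.mul_sub, Matrix.sub_mul, Matrix.mul_add, Matrix.add_mul, Matrix.mul_neg, Matrix.neg_mul, Matrix.mul_assoc, neg_neg, neg_add, sub_eq_add_neg]; abel

theorem reduced_G_eq_neg_H_K {n1 n2 m : ℕ}
    (Λ1 : Matrix (Fin m) (Fin n1) ℂ) (Λ2 : Matrix (Fin m) (Fin n2) ℂ)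
    (M12 : Matrix (Fin n1) (Fin n2) ℂ) (M22 : Matrix (Fin n2) (Fin n2) ℂ)
    (S : Matrix (Fin m) (Fin m) ℂ)
    (hM22 : M22.IsHermitian) (hS : Sᴴ * S = 1)
    (hF22 : IsUnit (-((1 / 2 : ℂ) • (Λ2ᴴ * Λ2) + Complex.I • M22)))
    (F12 : Matrix (Fin n1) (Fin n2) ℂ) (F21 : Matrix (Fin n2) (Fin n1) ℂ)
    (F22 : Matrix (Fin n2) (Fin n2) ℂ)
    (G1 : Matrix (Fin n1) (Fin m) ℂ) (G2 : Matrix (Fin n2) (Fin m) ℂ)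
    (H1 : Matrix (Fin m) (Fin n1) ℂ) (H2 : Matrix (Fin m) (Fin n2) ℂ)
    (K : Matrix (Fin m) (Fin m) ℂ)
    (hF12 : F12 = -((1 / 2 : ℂ) • (Λ1ᴴ * Λ2) + Complex.I • M12))
    (hF21 : F21 = -((1 / 2 : ℂ) • (Λ2ᴴ * Λ1) + Complex.I • M12ᴴ))
    (hF22' : F22 = -((1 / 2 : ℂ) • (Λ2ᴴ * Λ2) + Complex.I • M22))
    (hG1 : G1 = -(Λ1ᴴ * S)) (hG2 : G2 = -(Λ2ᴴ * S))
    (hH1 : H1 = Λ1) (hH2 : H2 = Λ2) (hK : K = S) :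
    G1 - F12 * F22⁻¹ * G2 =
      -((H1 - H2 * F22⁻¹ * F21)ᴴ * (K - H2 * F22⁻¹ * G2)) := by
  have hU : IsUnit F22 := hF22' ▸ hF22
  have hP : Λ1ᴴ * Λ2 = -(F12 + F21ᴴ) := by
    rw [hF12, hF21]
    simp only [Matrix.conjTranspose_neg, Matrix.conjTranspose_add,
      Matrix.conjTranspose_smul, Matrix.conjTranspose_mul,
      Matrix.conjTranspose_conjTranspose, Complex.star_def, Complex.conj_I, map_ofNat, map_div₀, _root_.map_one]
    norm_num
    module
  have hQ : Λ2ᴴ * Λ2 = -(F22 + F22ᴴ) := by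
    rw [hF22']
    simp only [Matrix.conjTranspose_neg, Matrix.conjTranspose_add,
      Matrix.conjTranspose_smul, Matrix.conjTranspose_mul,
      Matrix.conjTranspose_conjTranspose, Complex.star_def, Complex.conj_I, map_ofNat, map_div₀, _root_.map_one, hM22.eq]
    norm_num
    module
  rw [hG1, hG2, hH1, hH2, hK]
  exact key_aux Λ1 Λ2 S F12 F21 F22 hU hP hQ
end

section
/- Let Λ1 ∈ ℂ^{m×n1}, Λ2 ∈ ℂ^{m×n2}, let M11 ∈ ℂ^{n1×n1} and M22 ∈ ℂ^{n2×n2} be Hermitian, let M12 ∈ ℂ^{n1×n2}, let S ∈ ℂ^{m×m} satisfy S†S = I, and suppose F22 := −((1/2)Λ2†Λ2 + iM22) is invertible. With F11 = −((1/2)Λ1†Λ1 + iM11), F12 = −((1/2)Λ1†Λ2 + iM12), F21 = −((1/2)Λ2†Λ1 + iM12†), G1 = −Λ1†S, G2 = −Λ2†S, define F0 = F11 − F12F22⁻¹F21 and G0 = G1 − F12F22⁻¹G2. Then F0 + F0† + G0G0† = 0. -/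
open Matrix

theorem reduced_lyapunov_identity {n1 n2 m : ℕ}
    (Λ1 : Matrix (Fin m) (Fin n1) ℂ) (Λ2 : Matrix (Fin m) (Fin n2) ℂ)
    (M11 : Matrix (Fin n1) (Fin n1) ℂ) (M22 : Matrix (Fin n2) (Fin n2) ℂ)
    (M12 : Matrix (Fin n1) (Fin n2) ℂ) (S : Matrix (Fin m) (Fin m) ℂ)
    (hM11 : M11.IsHermitian) (hM22 : M22.IsHermitian) (hS : Sᴴ * S = 1)
    (hF22 : IsUnit (-((1 / 2 : ℂ) • (Λ2ᴴ * Λ2) + Complex.I • M22)))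
    (F11 : Matrix (Fin n1) (Fin n1) ℂ) (F12 : Matrix (Fin n1) (Fin n2) ℂ)
    (F21 : Matrix (Fin n2) (Fin n1) ℂ) (F22 : Matrix (Fin n2) (Fin n2) ℂ)
    (G1 : Matrix (Fin n1) (Fin m) ℂ) (G2 : Matrix (Fin n2) (Fin m) ℂ)
    (hF11 : F11 = -((1 / 2 : ℂ) • (Λ1ᴴ * Λ1) + Complex.I • M11))
    (hF12 : F12 = -((1 / 2 : ℂ) • (Λ1ᴴ * Λ2) + Complex.I • M12))
    (hF21 : F21 = -((1 / 2 : ℂ) • (Λ2ᴴ * Λ1) + Complex.I • M12ᴴ))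
    (hF22' : F22 = -((1 / 2 : ℂ) • (Λ2ᴴ * Λ2) + Complex.I • M22))
    (hG1 : G1 = -(Λ1ᴴ * S)) (hG2 : G2 = -(Λ2ᴴ * S)) :
    (F11 - F12 * F22⁻¹ * F21) + (F11 - F12 * F22⁻¹ * F21)ᴴ +
      (G1 - F12 * F22⁻¹ * G2) * (G1 - F12 * F22⁻¹ * G2)ᴴ = 0 := by
  have hSS : S * Sᴴ = 1 := mul_eq_one_comm.mp hS
  have hUnit : IsUnit F22.det := (Matrix.isUnit_iff_isUnit_det _).mp (hF22' ▸ hF22)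
  have hXF : F22⁻¹ * F22 = 1 := Matrix.nonsing_inv_mul _ hUnit
  have hFX : F22 * F22⁻¹ = 1 := Matrix.mul_nonsing_inv _ hUnit
  set X := F22⁻¹ with hX
  have hFhXh : F22ᴴ * Xᴴ = 1 := by
    rw [← Matrix.conjTranspose_mul, hXF, Matrix.conjTranspose_one]
  -- Gram identities
  have gram : ∀ {k l : ℕ} (A : Matrix (Fin m) (Fin k) ℂ) (B : Matrix (Fin m) (Fin l) ℂ),
      (-(Aᴴ * S)) * (-(Bᴴ * S))ᴴ = Aᴴ * B := by
    intro k l A B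
    rw [Matrix.conjTranspose_neg, Matrix.conjTranspose_mul, Matrix.conjTranspose_conjTranspose,
      Matrix.neg_mul, Matrix.mul_neg, neg_neg, Matrix.mul_assoc, ← Matrix.mul_assoc S, hSS, Matrix.one_mul]
  have hG11 : G1 * G1ᴴ = Λ1ᴴ * Λ1 := by rw [hG1]; exact gram _ _
  have hG12 : G1 * G2ᴴ = Λ1ᴴ * Λ2 := by rw [hG1, hG2]; exact gram _ _
  have hG21 : G2 * G1ᴴ = Λ2ᴴ * Λ1 := by rw [hG2, hG1]; exact gram _ _
  have hG22 : G2 * G2ᴴ = Λ2ᴴ * Λ2 := by rw [hG2]; exact gram _ _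
  -- Hermitian-part identities
  have hΛ11 : (Λ1ᴴ * Λ1)ᴴ = Λ1ᴴ * Λ1 := by
    rw [Matrix.conjTranspose_mul, Matrix.conjTranspose_conjTranspose]
  have hΛ22 : (Λ2ᴴ * Λ2)ᴴ = Λ2ᴴ * Λ2 := by
    rw [Matrix.conjTranspose_mul, Matrix.conjTranspose_conjTranspose]
  have hΛ12 : (Λ1ᴴ * Λ2)ᴴ = Λ2ᴴ * Λ1 := by
    rw [Matrix.conjTranspose_mul, Matrix.conjTranspose_conjTranspose]
  have h11 : F11 + F11ᴴ = -(Λ1ᴴ * Λ1) := by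
    rw [hF11]
    simp only [Matrix.conjTranspose_neg, Matrix.conjTranspose_add, Matrix.conjTranspose_smul,
      hΛ11, hM11.eq, Complex.star_def, Complex.conj_I, map_div₀, _root_.map_one, map_ofNat]
    module
  have h22 : F22 + F22ᴴ = -(Λ2ᴴ * Λ2) := by
    rw [hF22']
    simp only [Matrix.conjTranspose_neg, Matrix.conjTranspose_add, Matrix.conjTranspose_smul,
      hΛ22, hM22.eq, Complex.star_def, Complex.conj_I, map_div₀, _root_.map_one, map_ofNat]
    module
  have h12 : F12 + F21ᴴ = -(Λ1ᴴ * Λ2) := by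
    rw [hF12, hF21]
    simp only [Matrix.conjTranspose_neg, Matrix.conjTranspose_add, Matrix.conjTranspose_smul,
      Matrix.conjTranspose_conjTranspose, Complex.star_def, Complex.conj_I,
      map_div₀, _root_.map_one, map_ofNat]
    rw [show (Λ2ᴴ * Λ1)ᴴ = Λ1ᴴ * Λ2 by
      rw [Matrix.conjTranspose_mul, Matrix.conjTranspose_conjTranspose]]
    module
  have h21 : F21 + F12ᴴ = -(Λ2ᴴ * Λ1) := by
    rw [hF12, hF21]
    simp only [Matrix.conjTranspose_neg, Matrix.conjTranspose_add, Matrix.conjTranspose_smul,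
      Complex.star_def, Complex.conj_I, map_div₀, _root_.map_one, map_ofNat, hΛ12]
    module
  -- expand the goal
  have t2 : F22ᴴ * (Xᴴ * F12ᴴ) = F12ᴴ := by
    rw [← Matrix.mul_assoc, hFhXh, Matrix.one_mul]
  have t1 : X * (F22 * (Xᴴ * F12ᴴ)) = Xᴴ * F12ᴴ := by
    rw [← Matrix.mul_assoc, hXF, Matrix.one_mul]
  have expand : (F11 - F12 * X * F21) + (F11 - F12 * X * F21)ᴴ +
      (G1 - F12 * X * G2) * (G1 - F12 * X * G2)ᴴ =
      (F11 + F11ᴴ + G1 * G1ᴴ) - F12 * X * F21 - F21ᴴ * (Xᴴ * F12ᴴ)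
        - F12 * X * (G2 * G1ᴴ) - G1 * G2ᴴ * (Xᴴ * F12ᴴ)
        + F12 * X * (G2 * G2ᴴ) * (Xᴴ * F12ᴴ) := by
    simp only [Matrix.conjTranspose_sub, Matrix.conjTranspose_mul, Matrix.sub_mul,
      Matrix.mul_sub, Matrix.mul_assoc]
    abel
  rw [expand, hG11, hG12, hG21, hG22, h11]
  rw [show Λ2ᴴ * Λ1 = -(F21 + F12ᴴ) from by rw [h21, neg_neg],
      show Λ1ᴴ * Λ2 = -(F12 + F21ᴴ) from by rw [h12, neg_neg],
      show Λ2ᴴ * Λ2 = -(F22 + F22ᴴ) from by rw [h22, neg_neg]]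
  simp only [Matrix.mul_add, Matrix.add_mul, Matrix.mul_neg, Matrix.neg_mul,
    Matrix.mul_assoc, t1, t2]
  abel
end

section
/- Let F ∈ ℂ^{n×n}, G ∈ ℂ^{n×m}, H ∈ ℂ^{m×n}, K ∈ ℂ^{m×m}, and suppose there exists a Hermitian positive definite matrix Θ ∈ ℂ^{n×n} such that FΘ + ΘF† + GG† = 0, G = −ΘH†K, and K†K = I. Then for every ω ∈ ℝ such that iωI − F is invertible, the transfer function value Φ(iω) = H(iωI − F)⁻¹G + K satisfies both Φ(iω)Φ(iω)† = I and Φ(iω)†Φ(iω) = I. -/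
open Matrix ComplexOrder

theorem transfer_function_allpass {n m : ℕ}
    (F : Matrix (Fin n) (Fin n) ℂ) (G : Matrix (Fin n) (Fin m) ℂ)
    (H : Matrix (Fin m) (Fin n) ℂ) (K : Matrix (Fin m) (Fin m) ℂ)
    (Θ : Matrix (Fin n) (Fin n) ℂ) (hΘ : Θ.PosDef)
    (h1 : F * Θ + Θ * Fᴴ + G * Gᴴ = 0)
    (h2 : G = -Θ * Hᴴ * K)
    (h3 : Kᴴ * K = 1) :
    ∀ ω : ℝ,
      IsUnit ((Complex.I * (ω : ℂ)) • (1 : Matrix (Fin n) (Fin n) ℂ) - F) →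
      (H * ((Complex.I * (ω : ℂ)) • (1 : Matrix (Fin n) (Fin n) ℂ) - F)⁻¹ * G + K) *
        (H * ((Complex.I * (ω : ℂ)) • (1 : Matrix (Fin n) (Fin n) ℂ) - F)⁻¹ * G + K)ᴴ = 1 ∧
      (H * ((Complex.I * (ω : ℂ)) • (1 : Matrix (Fin n) (Fin n) ℂ) - F)⁻¹ * G + K)ᴴ *
        (H * ((Complex.I * (ω : ℂ)) • (1 : Matrix (Fin n) (Fin n) ℂ) - F)⁻¹ * G + K) = 1 := by
  intro ω hA
  set A : Matrix (Fin n) (Fin n) ℂ :=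
    (Complex.I * (ω : ℂ)) • (1 : Matrix (Fin n) (Fin n) ℂ) - F with hAdef
  set S : Matrix (Fin n) (Fin n) ℂ := A⁻¹ with hSdef
  have hdet : IsUnit A.det := (Matrix.isUnit_iff_isUnit_det A).mp hA
  have hSA : S * A = 1 := Matrix.nonsing_inv_mul A hdet
  have hAS : Aᴴ * Sᴴ = 1 := by rw [← Matrix.conjTranspose_mul, hSA, Matrix.conjTranspose_one]
  have hKK : K * Kᴴ = 1 := mul_eq_one_comm.mp h3
  have hΘH : Θᴴ = Θ := hΘ.isHermitian
  have hGK : G * Kᴴ = -(Θ * Hᴴ) := by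
    rw [h2, Matrix.mul_assoc, hKK, Matrix.mul_one]
    simp [Matrix.neg_mul]
  have hKG : K * Gᴴ = -(H * Θ) := by
    rw [h2]
    simp only [Matrix.conjTranspose_mul, Matrix.conjTranspose_neg, hΘH,
      Matrix.conjTranspose_conjTranspose, Matrix.mul_neg, Matrix.neg_mul]
    rw [← Matrix.mul_assoc, ← Matrix.mul_assoc, hKK, Matrix.one_mul]
  have hAH : Aᴴ = (-(Complex.I * (ω : ℂ))) • (1 : Matrix (Fin n) (Fin n) ℂ) - Fᴴ := by
    simp [hAdef, Matrix.conjTranspose_smul, Complex.star_def, Complex.conj_I,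
      Complex.conj_ofReal, neg_mul]
  have hGG : G * Gᴴ = A * Θ + Θ * Aᴴ := by
    have h1' : F * Θ + Θ * Fᴴ = -(G * Gᴴ) := by
      rw [← add_eq_zero_iff_eq_neg]; exact h1
    rw [hAdef, hAH, Matrix.sub_mul, Matrix.mul_sub, Matrix.smul_mul, Matrix.one_mul,
      Matrix.mul_smul, Matrix.mul_one, neg_smul]
    have : (Complex.I * (ω:ℂ)) • Θ - F * Θ + (-((Complex.I * (ω:ℂ)) • Θ) - Θ * Fᴴ)
        = -(F * Θ + Θ * Fᴴ) := by abel
    rw [this, h1', neg_neg]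
  have e1 : S * (G * Gᴴ) * Sᴴ = Θ * Sᴴ + S * Θ :=
    calc S * (G * Gᴴ) * Sᴴ = S * (A * Θ + Θ * Aᴴ) * Sᴴ := by rw [hGG]
    _ = (S * A) * (Θ * Sᴴ) + (S * Θ) * (Aᴴ * Sᴴ) := by
        simp only [Matrix.mul_add, Matrix.add_mul, Matrix.mul_assoc]
    _ = Θ * Sᴴ + S * Θ := by rw [hSA, hAS, Matrix.one_mul, Matrix.mul_one]
  have main : (H * S * G + K) * (H * S * G + K)ᴴ = 1 := by
    have expand : (H * S * G + K) * (H * S * G + K)ᴴ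
        = H * (S * (G * Gᴴ) * Sᴴ) * Hᴴ + H * (S * (G * Kᴴ)) + (K * Gᴴ) * Sᴴ * Hᴴ
          + K * Kᴴ := by
      simp only [Matrix.conjTranspose_add, Matrix.conjTranspose_mul, Matrix.add_mul,
        Matrix.mul_add, Matrix.mul_assoc]
      abel
    rw [expand, e1, hGK, hKG, hKK]
    have h4 : H * (Θ * Sᴴ + S * Θ) * Hᴴ = H * (Θ * (Sᴴ * Hᴴ)) + H * (S * (Θ * Hᴴ)) := by
      simp only [Matrix.mul_add, Matrix.add_mul, Matrix.mul_assoc]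
    rw [h4]
    simp only [Matrix.mul_neg, Matrix.neg_mul, Matrix.mul_assoc]
    abel
  exact ⟨main, mul_eq_one_comm.mp main⟩
end

section
/- Let F11 ∈ ℂ^{n1×n1}, F12 ∈ ℂ^{n1×n2}, F21 ∈ ℂ^{n2×n1}, F22 ∈ ℂ^{n2×n2} with F22 invertible, G1 ∈ ℂ^{n1×m}, G2 ∈ ℂ^{n2×m}, H1 ∈ ℂ^{m×n1}, H2 ∈ ℂ^{m×n2}, K ∈ ℂ^{m×m}. For ε > 0 set F_ε = [[F11, F12],[F21/ε, F22/ε]], G_ε = [[G1],[G2/ε]], H = [H1 H2], and define F0 = F11 − F12F22⁻¹F21, G0 = G1 − F12F22⁻¹G2, H0 = H1 − H2F22⁻¹F21, K0 = K − H2F22⁻¹G2. Fix s ∈ ℂ with s ≠ 0 such that sI − F0 is invertible. Then for all sufficiently small ε > 0 the matrix sI − F_ε is invertible, and H(sI − F_ε)⁻¹G_ε + K converges to H0(sI − F0)⁻¹G0 + K0 as ε → 0⁺. -/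
/-!
For `ε ≠ 0` the lower-right block of `sI - F_ε` is `-ε⁻¹ (F₂₂ - ε s)`, whose Schur complement is
`sI - (F₁₁ - F₁₂ (F₂₂ - ε s)⁻¹ F₂₁)`. The block-inverse formula then turns the full transfer
function into the slow-subsystem formula with `F₂₂⁻¹` replaced by `(F₂₂ - ε s)⁻¹`, all factors
`ε` and `ε⁻¹` cancelling. Matrix inversion is continuous at invertible matrices, so letting
`ε → 0` gives the reduced transfer function.
-/

open Matrix Filter ComplexOrder
open scoped Topology

namespace Matrix

variable {α : Type*} [CommRing α] {l m n : Type*} [Fintype m] [Fintype n] [DecidableEq m]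
  [DecidableEq n]

theorem isUnit_fromBlocks_of_isUnit₂₂ {A : Matrix m m α} {B : Matrix m n α} {C : Matrix n m α}
    {D : Matrix n n α} (hD : IsUnit D) (hS : IsUnit (A - B * D⁻¹ * C)) :
    IsUnit (fromBlocks A B C D) := by
  have := hD.invertible
  rw [isUnit_fromBlocks_iff_of_invertible₂₂, invOf_eq_nonsing_inv]
  exact hS

theorem fromCols_mul_inv_fromBlocks_mul_fromRows {A : Matrix m m α} {B : Matrix m n α}
    {C : Matrix n m α} {D : Matrix n n α} (hD : IsUnit D) (hS : IsUnit (A - B * D⁻¹ * C))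
    (H₁ : Matrix l m α) (H₂ : Matrix l n α) (G₁ : Matrix m l α) (G₂ : Matrix n l α) :
    fromCols H₁ H₂ * (fromBlocks A B C D)⁻¹ * fromRows G₁ G₂ =
      (H₁ - H₂ * D⁻¹ * C) * (A - B * D⁻¹ * C)⁻¹ * (G₁ - B * D⁻¹ * G₂) + H₂ * D⁻¹ * G₂ := by
  have := hD.invertible
  have : Invertible (A - B * ⅟D * C) := by rw [invOf_eq_nonsing_inv]; exact hS.invertible
  have := (isUnit_fromBlocks_of_isUnit₂₂ hD hS).invertible
  rw [← invOf_eq_nonsing_inv (fromBlocks A B C D), invOf_fromBlocks₂₂_eq]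
  simp only [invOf_eq_nonsing_inv, fromCols_mul_fromBlocks, fromCols_mul_fromRows,
    Matrix.mul_sub, Matrix.sub_mul, Matrix.mul_add, Matrix.add_mul, Matrix.mul_neg,
    Matrix.neg_mul, Matrix.mul_assoc]
  abel

theorem inv_neg_inv_smul {𝕜 : Type*} [Field 𝕜] {n : Type*} [Fintype n] [DecidableEq n] {ε : 𝕜}
    (hε : ε ≠ 0) {N : Matrix n n 𝕜} (hN : IsUnit N) : (-(ε⁻¹ • N))⁻¹ = -(ε • N⁻¹) := by
  refine inv_eq_right_inv ?_
  rw [neg_mul_neg, smul_mul_smul_comm, inv_mul_cancel₀ hε, one_smul,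
    mul_nonsing_inv N ((isUnit_iff_isUnit_det N).mp hN)]

section Topology

variable {𝕜 : Type*} [Field 𝕜] [TopologicalSpace 𝕜] {n : Type*} [DecidableEq n]

theorem tendsto_sub_smul_one_nhds_zero [IsTopologicalRing 𝕜] (A : Matrix n n 𝕜) (s : 𝕜) :
    Tendsto (fun ε : 𝕜 => A - (ε * s) • 1) (𝓝 0) (𝓝 A) := by
  have hcont : Continuous fun ε : 𝕜 => A - (ε * s) • (1 : Matrix n n 𝕜) := by fun_prop
  simpa using hcont.tendsto 0

variable [Fintype n]

theorem eventually_isUnit_nhds [IsTopologicalRing 𝕜] [T1Space 𝕜] {A : Matrix n n 𝕜}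
    (hA : IsUnit A) : ∀ᶠ B in 𝓝 A, IsUnit B := by
  have hdet : A.det ≠ 0 := ((isUnit_iff_isUnit_det A).mp hA).ne_zero
  filter_upwards [(continuous_id.matrix_det.tendsto A).eventually (eventually_ne_nhds hdet)]
    with B hB
  exact (isUnit_iff_isUnit_det B).mpr (isUnit_iff_ne_zero.mpr hB)

theorem continuousAt_inv_of_isUnit [IsTopologicalDivisionRing 𝕜] {A : Matrix n n 𝕜}
    (hA : IsUnit A) : ContinuousAt Inv.inv A := by
  refine continuousAt_matrix_inv A ?_
  rw [Ring.inverse_eq_inv']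
  exact continuousAt_inv₀ ((isUnit_iff_isUnit_det A).mp hA).ne_zero

end Topology

end Matrix

namespace SingularPerturbation

variable {𝕜 : Type*} [Field 𝕜] {n₁ n₂ m : Type*} [DecidableEq n₁]
  (F₁₁ : Matrix n₁ n₁ 𝕜) (F₁₂ : Matrix n₁ n₂ 𝕜) (F₂₁ : Matrix n₂ n₁ 𝕜) (F₂₂ : Matrix n₂ n₂ 𝕜)
  (G₁ : Matrix n₁ m 𝕜) (G₂ : Matrix n₂ m 𝕜) (H₁ : Matrix m n₁ 𝕜) (H₂ : Matrix m n₂ 𝕜)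
  (K : Matrix m m 𝕜) (s : 𝕜) {ε : 𝕜}

theorem smul_one_sub_fromBlocks [DecidableEq n₂] (hε : ε ≠ 0) :
    s • 1 - fromBlocks F₁₁ F₁₂ (ε⁻¹ • F₂₁) (ε⁻¹ • F₂₂) =
      fromBlocks (s • 1 - F₁₁) (-F₁₂) (-(ε⁻¹ • F₂₁)) (-(ε⁻¹ • (F₂₂ - (ε * s) • 1))) := by
  rw [← fromBlocks_one, fromBlocks_smul, sub_eq_add_neg, fromBlocks_neg, fromBlocks_add]
  congr 1 <;> simp [smul_smul, hε, sub_eq_add_neg, add_comm]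

variable [Fintype n₁] [Fintype n₂]

/-- At `X = F₂₂⁻¹` this is the slow-subsystem transfer function; at `X = (F₂₂ - ε s)⁻¹` it is the
full transfer function at parameter `ε`. -/
noncomputable def reducedTransfer (X : Matrix n₂ n₂ 𝕜) : Matrix m m 𝕜 :=
  (H₁ - H₂ * X * F₂₁) * (s • 1 - (F₁₁ - F₁₂ * X * F₂₁))⁻¹ * (G₁ - F₁₂ * X * G₂) +
    (K - H₂ * X * G₂)

theorem continuousAt_reducedTransfer [TopologicalSpace 𝕜] [IsTopologicalDivisionRing 𝕜]
    {X : Matrix n₂ n₂ 𝕜} (hX : IsUnit (s • 1 - (F₁₁ - F₁₂ * X * F₂₁))) :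
    ContinuousAt (reducedTransfer F₁₁ F₁₂ F₂₁ G₁ G₂ H₁ H₂ K s) X := by
  have hinv : ContinuousAt (fun Y : Matrix n₂ n₂ 𝕜 => (s • 1 - (F₁₁ - F₁₂ * Y * F₂₁))⁻¹) X :=
    (continuousAt_inv_of_isUnit hX).comp (f := fun Y => s • 1 - (F₁₁ - F₁₂ * Y * F₂₁))
      (by fun_prop)
  unfold reducedTransfer
  fun_prop

variable [DecidableEq n₂]

noncomputable def perturbedTransfer (ε : 𝕜) : Matrix m m 𝕜 :=
  fromCols H₁ H₂ * (s • 1 - fromBlocks F₁₁ F₁₂ (ε⁻¹ • F₂₁) (ε⁻¹ • F₂₂))⁻¹ *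
    fromRows G₁ (ε⁻¹ • G₂) + K

theorem perturbedTransfer_eq_reducedTransfer (hε : ε ≠ 0) (hN : IsUnit (F₂₂ - (ε * s) • 1))
    (hS : IsUnit (s • 1 - (F₁₁ - F₁₂ * (F₂₂ - (ε * s) • 1)⁻¹ * F₂₁))) :
    IsUnit (s • 1 - fromBlocks F₁₁ F₁₂ (ε⁻¹ • F₂₁) (ε⁻¹ • F₂₂)) ∧
      perturbedTransfer F₁₁ F₁₂ F₂₁ F₂₂ G₁ G₂ H₁ H₂ K s ε =
        reducedTransfer F₁₁ F₁₂ F₂₁ G₁ G₂ H₁ H₂ K s (F₂₂ - (ε * s) • 1)⁻¹ := by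
  set N := F₂₂ - (ε * s) • 1
  have hD : IsUnit (-(ε⁻¹ • N)) := (hN.smul (Units.mk0 ε⁻¹ (inv_ne_zero hε))).neg
  have hSchur : s • 1 - F₁₁ - -F₁₂ * (-(ε⁻¹ • N))⁻¹ * -(ε⁻¹ • F₂₁) =
      s • 1 - (F₁₁ - F₁₂ * N⁻¹ * F₂₁) := by
    rw [inv_neg_inv_smul hε hN]
    simp only [Matrix.mul_neg, Matrix.mul_smul, Matrix.neg_mul, smul_neg, neg_neg, smul_mul,
      smul_smul, inv_mul_cancel₀ hε, one_smul, sub_neg_eq_add]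
    abel
  rw [← hSchur] at hS
  unfold perturbedTransfer
  rw [smul_one_sub_fromBlocks _ _ _ _ _ hε]
  refine ⟨isUnit_fromBlocks_of_isUnit₂₂ hD hS, ?_⟩
  rw [fromCols_mul_inv_fromBlocks_mul_fromRows hD hS, hSchur, inv_neg_inv_smul hε hN]
  unfold reducedTransfer
  simp only [Matrix.mul_neg, Matrix.mul_smul, Matrix.neg_mul, smul_mul, smul_neg, smul_smul,
    inv_mul_cancel₀ hε, one_smul, neg_neg]
  abel

variable [TopologicalSpace 𝕜] [IsTopologicalDivisionRing 𝕜]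

theorem tendsto_inv_sub_smul_one (hF₂₂ : IsUnit F₂₂) :
    Tendsto (fun ε : 𝕜 => (F₂₂ - (ε * s) • 1)⁻¹) (𝓝 0) (𝓝 F₂₂⁻¹) :=
  (continuousAt_inv_of_isUnit hF₂₂).tendsto.comp (tendsto_sub_smul_one_nhds_zero F₂₂ s)

theorem eventually_perturbedTransfer_eq [T1Space 𝕜] (hF₂₂ : IsUnit F₂₂)
    (hF₀ : IsUnit (s • 1 - (F₁₁ - F₁₂ * F₂₂⁻¹ * F₂₁))) :
    ∀ᶠ ε in 𝓝[≠] 0, IsUnit (s • 1 - fromBlocks F₁₁ F₁₂ (ε⁻¹ • F₂₁) (ε⁻¹ • F₂₂)) ∧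
      perturbedTransfer F₁₁ F₁₂ F₂₁ F₂₂ G₁ G₂ H₁ H₂ K s ε =
        reducedTransfer F₁₁ F₁₂ F₂₁ G₁ G₂ H₁ H₂ K s (F₂₂ - (ε * s) • 1)⁻¹ := by
  have hfast : ∀ᶠ ε : 𝕜 in 𝓝 0, IsUnit (F₂₂ - (ε * s) • 1) :=
    (tendsto_sub_smul_one_nhds_zero F₂₂ s).eventually (eventually_isUnit_nhds hF₂₂)
  have hslow :
      ∀ᶠ ε : 𝕜 in 𝓝 0, IsUnit (s • 1 - (F₁₁ - F₁₂ * (F₂₂ - (ε * s) • 1)⁻¹ * F₂₁)) := by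
    have hcont : Continuous fun X : Matrix n₂ n₂ 𝕜 => s • 1 - (F₁₁ - F₁₂ * X * F₂₁) := by
      fun_prop
    exact (tendsto_inv_sub_smul_one F₂₂ s hF₂₂).eventually
      ((hcont.tendsto _).eventually (eventually_isUnit_nhds hF₀))
  filter_upwards [self_mem_nhdsWithin, nhdsWithin_le_nhds hfast, nhdsWithin_le_nhds hslow]
    with ε hε hN hS
  exact perturbedTransfer_eq_reducedTransfer F₁₁ F₁₂ F₂₁ F₂₂ G₁ G₂ H₁ H₂ K s hε hN hS

theorem tendsto_perturbedTransfer [T1Space 𝕜] (hF₂₂ : IsUnit F₂₂)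
    (hF₀ : IsUnit (s • 1 - (F₁₁ - F₁₂ * F₂₂⁻¹ * F₂₁))) :
    Tendsto (perturbedTransfer F₁₁ F₁₂ F₂₁ F₂₂ G₁ G₂ H₁ H₂ K s) (𝓝[≠] 0)
      (𝓝 (reducedTransfer F₁₁ F₁₂ F₂₁ G₁ G₂ H₁ H₂ K s F₂₂⁻¹)) := by
  have hlim := (continuousAt_reducedTransfer F₁₁ F₁₂ F₂₁ G₁ G₂ H₁ H₂ K s hF₀).tendsto.comp
    (tendsto_inv_sub_smul_one F₂₂ s hF₂₂)
  refine (hlim.mono_left nhdsWithin_le_nhds).congr' ?_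
  filter_upwards [eventually_perturbedTransfer_eq F₁₁ F₁₂ F₂₁ F₂₂ G₁ G₂ H₁ H₂ K s hF₂₂ hF₀]
    with ε hε using hε.2.symm

end SingularPerturbation

open SingularPerturbation in
theorem perturbed_transfer_function_convergence_general {n1 n2 m : ℕ}
    (F11 : Matrix (Fin n1) (Fin n1) ℂ) (F12 : Matrix (Fin n1) (Fin n2) ℂ)
    (F21 : Matrix (Fin n2) (Fin n1) ℂ) (F22 : Matrix (Fin n2) (Fin n2) ℂ)
    (hF22 : IsUnit F22)
    (G1 : Matrix (Fin n1) (Fin m) ℂ) (G2 : Matrix (Fin n2) (Fin m) ℂ)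
    (H1 : Matrix (Fin m) (Fin n1) ℂ) (H2 : Matrix (Fin m) (Fin n2) ℂ)
    (K : Matrix (Fin m) (Fin m) ℂ)
    (s : ℂ)
    (hF0 : IsUnit (s • (1 : Matrix (Fin n1) (Fin n1) ℂ) - (F11 - F12 * F22⁻¹ * F21))) :
    (∀ᶠ ε in nhdsWithin (0 : ℝ) (Set.Ioi 0),
      IsUnit (s • (1 : Matrix (Fin n1 ⊕ Fin n2) (Fin n1 ⊕ Fin n2) ℂ)
        - fromBlocks F11 F12 ((ε : ℂ)⁻¹ • F21) ((ε : ℂ)⁻¹ • F22))) ∧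
    Tendsto
      (fun ε : ℝ =>
        fromCols H1 H2 *
            (s • (1 : Matrix (Fin n1 ⊕ Fin n2) (Fin n1 ⊕ Fin n2) ℂ)
              - fromBlocks F11 F12 ((ε : ℂ)⁻¹ • F21) ((ε : ℂ)⁻¹ • F22))⁻¹ *
            fromRows G1 ((ε : ℂ)⁻¹ • G2) + K)
      (nhdsWithin (0 : ℝ) (Set.Ioi 0))
      (nhds ((H1 - H2 * F22⁻¹ * F21) *
          (s • (1 : Matrix (Fin n1) (Fin n1) ℂ) - (F11 - F12 * F22⁻¹ * F21))⁻¹ *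
          (G1 - F12 * F22⁻¹ * G2) + (K - H2 * F22⁻¹ * G2))) := by
  have hgood := eventually_perturbedTransfer_eq F11 F12 F21 F22 G1 G2 H1 H2 K s hF22 hF0
  -- In the first conjunct the cast lands on the filter: `ε` is complex, under `ComplexOrder`.
  have hpos : 𝓝[>] ((0 : ℝ) : ℂ) ≤ 𝓝[≠] 0 := by
    rw [Complex.ofReal_zero]
    exact nhdsWithin_mono _ fun z hz => ne_of_gt hz
  have hreal : Tendsto ((↑) : ℝ → ℂ) (𝓝[>] 0) (𝓝[≠] 0) := by
    refine tendsto_nhdsWithin_iff.mpr ⟨?_, ?_⟩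
    · exact (Complex.continuous_ofReal.tendsto' 0 0 Complex.ofReal_zero).mono_left
        nhdsWithin_le_nhds
    · filter_upwards [self_mem_nhdsWithin] with x hx
      exact Complex.ofReal_ne_zero.mpr (ne_of_gt hx)
  exact ⟨(hgood.filter_mono hpos).mono fun _ h => h.1,
    (tendsto_perturbedTransfer F11 F12 F21 F22 G1 G2 H1 H2 K s hF22 hF0).comp hreal⟩

theorem perturbed_transfer_function_convergence {n1 n2 m : ℕ}
    (F11 : Matrix (Fin n1) (Fin n1) ℂ) (F12 : Matrix (Fin n1) (Fin n2) ℂ)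
    (F21 : Matrix (Fin n2) (Fin n1) ℂ) (F22 : Matrix (Fin n2) (Fin n2) ℂ)
    (hF22 : IsUnit F22)
    (G1 : Matrix (Fin n1) (Fin m) ℂ) (G2 : Matrix (Fin n2) (Fin m) ℂ)
    (H1 : Matrix (Fin m) (Fin n1) ℂ) (H2 : Matrix (Fin m) (Fin n2) ℂ)
    (K : Matrix (Fin m) (Fin m) ℂ)
    (s : ℂ) (hs : s ≠ 0)
    (hF0 : IsUnit (s • (1 : Matrix (Fin n1) (Fin n1) ℂ) - (F11 - F12 * F22⁻¹ * F21))) :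
    (∀ᶠ ε in nhdsWithin (0 : ℝ) (Set.Ioi 0),
      IsUnit (s • (1 : Matrix (Fin n1 ⊕ Fin n2) (Fin n1 ⊕ Fin n2) ℂ)
        - fromBlocks F11 F12 ((ε : ℂ)⁻¹ • F21) ((ε : ℂ)⁻¹ • F22))) ∧
    Tendsto
      (fun ε : ℝ =>
        fromCols H1 H2 *
            (s • (1 : Matrix (Fin n1 ⊕ Fin n2) (Fin n1 ⊕ Fin n2) ℂ)
              - fromBlocks F11 F12 ((ε : ℂ)⁻¹ • F21) ((ε : ℂ)⁻¹ • F22))⁻¹ *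
            fromRows G1 ((ε : ℂ)⁻¹ • G2) + K)
      (nhdsWithin (0 : ℝ) (Set.Ioi 0))
      (nhds ((H1 - H2 * F22⁻¹ * F21) *
          (s • (1 : Matrix (Fin n1) (Fin n1) ℂ) - (F11 - F12 * F22⁻¹ * F21))⁻¹ *
          (G1 - F12 * F22⁻¹ * G2) + (K - H2 * F22⁻¹ * G2))) :=
  perturbed_transfer_function_convergence_general F11 F12 F21 F22 hF22 G1 G2 H1 H2 K s hF0
end

section
/- For every ε > 0, the matrix F_ε = [[F11, I₂],[(1/(2ε))I₂, −(1/ε)I₂]] ∈ ℂ^{4×4}, where F11 = [[−1/2, 1],[−1, −1/2]] and I₂ is the 2×2 identity, is Hurwitz: every eigenvalue of F_ε has strictly negative real part. -/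
/-!
Since the lower blocks of `F_ε` are scalar, the Schur complement gives, with `c = 1/ε`,
`det (μ - F_ε) = (μ (μ + c + 1/2))² + (μ + c)²`, so every eigenvalue satisfies
`μ (μ + c + 1/2) = ± i (μ + c)`, a quadratic whose roots are read off from real and imaginary
parts.
-/

open Matrix Complex Polynomial ComplexConjugate

theorem Matrix.det_fromBlocks_smul_one₂₂ {n K : Type*} [Fintype n] [DecidableEq n] [Field K]
    (A B C : Matrix n n K) {d : K} (hd : d ≠ 0) :
    (fromBlocks A B C (d • 1)).det = (d • A - B * C).det := by
  have : Invertible (d • 1 : Matrix n n K) :=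
    ⟨d⁻¹ • 1, by simp [smul_smul, hd], by simp [smul_smul, hd]⟩
  rw [det_fromBlocks₂₂, invOf_eq_right_inv (b := d⁻¹ • 1) (by simp [smul_smul, hd]), det_smul,
    det_one, mul_one, ← det_smul]
  congr 1
  simp [smul_sub, smul_smul, hd]

theorem det_scalar_sub_fromBlocks_eq_sq_add_sq (c μ : ℂ) (hμ : μ + c ≠ 0) :
    (scalar _ μ - fromBlocks (!![-1/2, 1; -1, -1/2] : Matrix (Fin 2) (Fin 2) ℂ)
      (1 : Matrix (Fin 2) (Fin 2) ℂ) ((c / 2) • 1) ((-c) • 1)).det =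
      (μ * (μ + (c + 1/2))) ^ 2 + (μ + c) ^ 2 := by
  have hblocks : scalar (Fin 2 ⊕ Fin 2) μ - fromBlocks
      (!![-1/2, 1; -1, -1/2] : Matrix (Fin 2) (Fin 2) ℂ) (1 : Matrix (Fin 2) (Fin 2) ℂ)
      ((c / 2) • 1) ((-c) • 1) =
      fromBlocks (μ • 1 - !![-1/2, 1; -1, -1/2]) (-1) (-(c / 2) • 1) ((μ + c) • 1) := by
    rw [scalar_apply, ← smul_one_eq_diagonal, ← fromBlocks_one, fromBlocks_smul, sub_eq_add_neg,
      fromBlocks_neg, fromBlocks_add]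
    simp [add_smul, sub_eq_add_neg]
  have hschur : (μ + c) • (μ • 1 - !![-1/2, 1; -1, -1/2]) -
      (-1) * (-(c / 2) • 1 : Matrix (Fin 2) (Fin 2) ℂ) =
      !![μ * (μ + (c + 1/2)), -(μ + c); μ + c, μ * (μ + (c + 1/2))] := by
    ext i j
    fin_cases i <;> fin_cases j <;> simp <;> ring
  rw [hblocks, det_fromBlocks_smul_one₂₂ _ _ _ hμ, hschur, det_fin_two_of]
  ring

/-- With `s = x + i y`, the imaginary part reads `y (2x + b) = x + c` and the real part
`y (y - 1) = x (x + b)`. If `x ≥ 0`, the first forces `y > 0`, the second then `y ≥ 1`, and then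
`y (2x + b) ≥ 2x + b > x + c` contradicts the first. -/
theorem Complex.re_neg_of_mul_add_eq_I_mul {b c : ℝ} (hc : 0 < c) (hcb : c < b) {s : ℂ}
    (h : s * (s + b) = I * (s + c)) : s.re < 0 := by
  by_contra! hx
  obtain ⟨hre, him⟩ := Complex.ext_iff.1 h
  simp only [mul_re, mul_im, add_re, add_im, ofReal_re, ofReal_im, I_re, I_im] at hre him
  have him' : s.im * (2 * s.re + b) = s.re + c := by linear_combination him
  have hre' : s.im * (s.im - 1) = s.re * (s.re + b) := by linear_combination -hre
  have hy : 0 < s.im := pos_of_mul_pos_left (by rw [him']; linarith) (by linarith)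
  have hy1 : 1 ≤ s.im := by nlinarith [mul_nonneg hx (by linarith : 0 ≤ s.re + b)]
  nlinarith

theorem Complex.re_neg_of_sq_add_sq_eq_zero {b c : ℝ} (hc : 0 < c) (hcb : c < b) {s : ℂ}
    (h : (s * (s + b)) ^ 2 + (s + c) ^ 2 = 0) : s.re < 0 := by
  have hfactor : (s * (s + b) - I * (s + c)) * (s * (s + b) + I * (s + c)) = 0 := by
    linear_combination h - (s + c) ^ 2 * I_sq
  rcases mul_eq_zero.1 hfactor with hplus | hminus
  · exact re_neg_of_mul_add_eq_I_mul hc hcb (sub_eq_zero.1 hplus)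
  · have hconj : conj s * (conj s + b) = I * (conj s + c) := by
      simpa [conj_ofReal] using congrArg conj (eq_neg_of_add_eq_zero_left hminus)
    simpa using re_neg_of_mul_add_eq_I_mul hc hcb hconj

theorem example_Hurwitz (ε : ℝ) (hε : 0 < ε) :
    ∀ μ ∈ spectrum ℂ
      (fromBlocks (!![-1/2, 1; -1, -1/2] : Matrix (Fin 2) (Fin 2) ℂ)
        (1 : Matrix (Fin 2) (Fin 2) ℂ)
        ((1 / (2 * (ε : ℂ))) • (1 : Matrix (Fin 2) (Fin 2) ℂ))
        ((-(1 / (ε : ℂ))) • (1 : Matrix (Fin 2) (Fin 2) ℂ))),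
      μ.re < 0 := by
  intro μ hμ
  set c : ℝ := ε⁻¹
  have hc : 0 < c := inv_pos.2 hε
  rcases eq_or_ne (μ + c) 0 with hμc | hμc
  · simpa [eq_neg_of_add_eq_zero_left hμc] using hc
  rw [show 1 / (2 * (ε : ℂ)) = (c : ℂ) / 2 by push_cast [c]; ring,
    show -(1 / (ε : ℂ)) = -(c : ℂ) by push_cast [c]; ring, mem_spectrum_iff_isRoot_charpoly,
    IsRoot.def, eval_charpoly, det_scalar_sub_fromBlocks_eq_sq_add_sq _ _ hμc,
    show (c : ℂ) + 1 / 2 = ((c + 1 / 2 : ℝ) : ℂ) by push_cast; ring] at hμ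
  exact re_neg_of_sq_add_sq_eq_zero hc (by linarith) hμ
end

section
/- For every ε > 0, the system with F_ε = [[F11, I₂],[(1/(2ε))I₂, −(1/ε)I₂]] ∈ ℂ^{4×4}, F11 = [[−1/2, 1],[−1, −1/2]], G_ε = [[−I₂],[(1/ε)I₂]] ∈ ℂ^{4×2}, H = [I₂ −2I₂] ∈ ℂ^{2×4} is minimal: (controllability) if x ∈ ℂ⁴ satisfies x†F_ε = λx† for some λ ∈ ℂ and x†G_ε = 0, then x = 0; and (observability) if x ∈ ℂ⁴ satisfies F_εx = λx for some λ ∈ ℂ and Hx = 0, then x = 0. -/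
/-!
Both PBH tests are instances of one observation about block matrices. If `x = (L v, v)` is an
eigenvector of `fromBlocks P Q S T` with eigenvalue `μ`, and `S L + T = 0`, then the second block
row gives `μ v = 0`, so the first one gives `(P L + Q) v = μ L v = 0`; when `P L + Q` is
nonsingular this forces `v = 0`, hence `x = 0`. For observability `Hx = 0` says `u = 2v`, and for
controllability (applied to `Fᵀ` and `star x`) `x†G = 0` says `u = v / ε`; in both cases the
`ε`-dependent terms cancel in `S L + T`, and `P L + Q` is a nonzero multiple of a rotation.
-/

open Matrix

theorem Matrix.eq_zero_of_fromBlocks_mulVec_eq_smul_of_fromCols_mulVec_eq_zero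
    {R n : Type*} [CommRing R] [NoZeroDivisors R] [Fintype n] [DecidableEq n]
    {P Q S T L : Matrix n n R} (hST : S * L + T = 0) (hPQ : (P * L + Q).det ≠ 0)
    {x : n ⊕ n → R} {μ : R} (hx : fromBlocks P Q S T *ᵥ x = μ • x)
    (hL : fromCols 1 (-L) *ᵥ x = 0) : x = 0 := by
  obtain ⟨u, v, rfl⟩ : ∃ u v, x = Sum.elim u v := ⟨_, _, (Sum.elim_comp_inl_inr x).symm⟩
  rw [fromCols_mulVec_sumElim, one_mulVec, neg_mulVec, ← sub_eq_add_neg, sub_eq_zero] at hL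
  subst hL
  rw [fromBlocks_mulVec, Sum.elim_comp_inl, Sum.elim_comp_inr] at hx
  have htop : P *ᵥ L *ᵥ v + Q *ᵥ v = μ • L *ᵥ v := funext fun i => congrFun hx (Sum.inl i)
  have hbot : S *ᵥ L *ᵥ v + T *ᵥ v = μ • v := funext fun i => congrFun hx (Sum.inr i)
  have hμv : μ • v = 0 := by
    rw [← hbot, mulVec_mulVec, ← add_mulVec, hST, zero_mulVec]
  have hv : v = 0 := by
    refine eq_zero_of_mulVec_eq_zero hPQ ?_
    rw [add_mulVec, ← mulVec_mulVec, htop, ← mulVec_smul, hμv, mulVec_zero]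
  rw [hv, mulVec_zero, Sum.elim_zero_zero]

theorem det_transpose_mul_smul_one_add_smul_one_ne_zero {ε : ℂ} (hε : ε ≠ 0) :
    ((!![-1/2, 1; -1, -1/2] : Matrix (Fin 2) (Fin 2) ℂ)ᵀ * ((1 / ε) • 1)
      + (1 / (2 * ε)) • 1).det ≠ 0 := by
  have hrot : (!![-1/2, 1; -1, -1/2] : Matrix (Fin 2) (Fin 2) ℂ)ᵀ * ((1 / ε) • 1)
      + (1 / (2 * ε)) • 1 = !![0, -1 / ε; 1 / ε, 0] := by
    ext i j; fin_cases i <;> fin_cases j <;> simp <;> field_simp <;> ring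
  rw [hrot, det_fin_two_of]
  simp [hε]

theorem det_mul_two_smul_one_add_one_ne_zero :
    ((!![-1/2, 1; -1, -1/2] : Matrix (Fin 2) (Fin 2) ℂ) * ((2 : ℂ) • 1) + 1).det ≠ 0 := by
  have hrot : (!![-1/2, 1; -1, -1/2] : Matrix (Fin 2) (Fin 2) ℂ) * ((2 : ℂ) • 1) + 1
      = !![0, 2; -2, 0] := by
    ext i j; fin_cases i <;> fin_cases j <;> norm_num
  rw [hrot, det_fin_two_of]
  norm_num

theorem example_minimal (ε : ℝ) (hε : 0 < ε) :
    (∀ (x : Fin 2 ⊕ Fin 2 → ℂ) (lam : ℂ),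
      Matrix.vecMul (star x)
          (fromBlocks (!![-1/2, 1; -1, -1/2] : Matrix (Fin 2) (Fin 2) ℂ)
            (1 : Matrix (Fin 2) (Fin 2) ℂ)
            ((1 / (2 * (ε : ℂ))) • (1 : Matrix (Fin 2) (Fin 2) ℂ))
            ((-(1 / (ε : ℂ))) • (1 : Matrix (Fin 2) (Fin 2) ℂ))) = lam • star x →
      Matrix.vecMul (star x)
          (fromRows (-(1 : Matrix (Fin 2) (Fin 2) ℂ))
            ((1 / (ε : ℂ)) • (1 : Matrix (Fin 2) (Fin 2) ℂ))) = 0 →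
      x = 0) ∧
    (∀ (x : Fin 2 ⊕ Fin 2 → ℂ) (lam : ℂ),
      (fromBlocks (!![-1/2, 1; -1, -1/2] : Matrix (Fin 2) (Fin 2) ℂ)
          (1 : Matrix (Fin 2) (Fin 2) ℂ)
          ((1 / (2 * (ε : ℂ))) • (1 : Matrix (Fin 2) (Fin 2) ℂ))
          ((-(1 / (ε : ℂ))) • (1 : Matrix (Fin 2) (Fin 2) ℂ))).mulVec x = lam • x →
      (fromCols (1 : Matrix (Fin 2) (Fin 2) ℂ)
          (-(2 : ℂ) • (1 : Matrix (Fin 2) (Fin 2) ℂ))).mulVec x = 0 →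
      x = 0) := by
  have hε' : (ε : ℂ) ≠ 0 := Complex.ofReal_ne_zero.mpr hε.ne'
  constructor
  · intro x lam hF hG
    rw [← star_eq_zero]
    rw [← mulVec_transpose, fromBlocks_transpose] at hF
    rw [← mulVec_transpose, transpose_fromRows, ← neg_eq_zero, ← neg_mulVec, fromCols_neg,
      transpose_neg, neg_neg] at hG
    simp only [transpose_one, transpose_smul] at hF hG
    refine eq_zero_of_fromBlocks_mulVec_eq_smul_of_fromCols_mulVec_eq_zero ?_
      (det_transpose_mul_smul_one_add_smul_one_ne_zero hε') hF hG
    rw [one_mul, ← add_smul, add_neg_cancel, zero_smul]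
  · intro x lam hF hH
    rw [neg_smul] at hH
    refine eq_zero_of_fromBlocks_mulVec_eq_smul_of_fromCols_mulVec_eq_zero ?_
      det_mul_two_smul_one_add_one_ne_zero hF hH
    rw [smul_mul_smul_comm, one_mul, ← add_smul]
    field_simp
    simp
end

section
/- Consider the block data F11 = [[−1/2, 1],[−1, −1/2]], F12 = I₂, F21 = (1/2)I₂, F22 = −I₂, G1 = −I₂, G2 = I₂, H1 = I₂, H2 = −2I₂, K = I₂ (all 2×2 complex matrices). Then the reduced system matrices F0 = F11 − F12F22⁻¹F21, G0 = G1 − F12F22⁻¹G2, H0 = H1 − H2F22⁻¹F21, K0 = K − H2F22⁻¹G2 are F0 = [[0, 1],[−1, 0]], G0 = 0, H0 = 0, K0 = −I₂; moreover F0 is not Hurwitz (its eigenvalues are i and −i, which have zero real part), and the reduced system is not minimal (e.g. any eigenvector x of F0 satisfies H0x = 0). -/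
open Matrix

lemma spec_aux (μ : ℂ) : μ ∈ spectrum ℂ (!![0, 1; -1, 0] : Matrix (Fin 2) (Fin 2) ℂ) ↔ μ = Complex.I ∨ μ = -Complex.I := by
  rw [spectrum.mem_iff]
  rw [Matrix.isUnit_iff_isUnit_det, isUnit_iff_ne_zero, not_not]
  have : (algebraMap ℂ (Matrix (Fin 2) (Fin 2) ℂ) μ - !![0, 1; -1, 0]).det = (μ - Complex.I) * (μ + Complex.I) := by
    rw [Matrix.algebraMap_eq_diagonal]
    rw [show (diagonal ((algebraMap ℂ (Fin 2 → ℂ)) μ) - !![0, 1; -1, 0] : Matrix (Fin 2) (Fin 2) ℂ) = !![μ, -1; 1, μ] by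
      ext i j; fin_cases i <;> fin_cases j <;> simp [diagonal]]
    simp [Matrix.det_fin_two]
    ring_nf
    rw [Complex.I_sq]
    ring
  rw [this, mul_eq_zero, sub_eq_zero, add_eq_zero_iff_eq_neg]

lemma spec_eq : spectrum ℂ (!![0, 1; -1, 0] : Matrix (Fin 2) (Fin 2) ℂ) = {Complex.I, -Complex.I} := by
  ext μ; rw [spec_aux]; simp [Set.mem_insert_iff]

theorem example_reduced_system_pathological
    (F11 F12 F21 F22 G1 G2 H1 H2 K : Matrix (Fin 2) (Fin 2) ℂ)
    (hF11 : F11 = !![-1/2, 1; -1, -1/2]) (hF12 : F12 = 1) (hF21 : F21 = (1/2 : ℂ) • 1)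
    (hF22 : F22 = -1) (hG1 : G1 = -1) (hG2 : G2 = 1) (hH1 : H1 = 1)
    (hH2 : H2 = -(2 : ℂ) • 1) (hK : K = 1) :
    F11 - F12 * F22⁻¹ * F21 = !![0, 1; -1, 0] ∧
    G1 - F12 * F22⁻¹ * G2 = 0 ∧
    H1 - H2 * F22⁻¹ * F21 = 0 ∧
    K - H2 * F22⁻¹ * G2 = -1 ∧
    spectrum ℂ (F11 - F12 * F22⁻¹ * F21) = {Complex.I, -Complex.I} ∧
    (∀ μ ∈ spectrum ℂ (F11 - F12 * F22⁻¹ * F21), μ.re = 0) ∧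
    ¬ (∀ μ ∈ spectrum ℂ (F11 - F12 * F22⁻¹ * F21), μ.re < 0) ∧
    ¬ (∀ (x : Fin 2 → ℂ) (lam : ℂ),
        (F11 - F12 * F22⁻¹ * F21).mulVec x = lam • x →
        (H1 - H2 * F22⁻¹ * F21).mulVec x = 0 → x = 0) := by
  subst hF11 hF12 hF21 hF22 hG1 hG2 hH1 hH2 hK
  have hinv : (-1 : Matrix (Fin 2) (Fin 2) ℂ)⁻¹ = -1 :=
    Matrix.inv_eq_left_inv (by simp)
  rw [hinv]
  have hF0 : (!![-1/2, 1; -1, -1/2] : Matrix (Fin 2) (Fin 2) ℂ) - 1 * -1 * ((1/2 : ℂ) • 1) = !![0, 1; -1, 0] := by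
    ext i j; fin_cases i <;> fin_cases j <;> simp [Matrix.one_apply] <;> norm_num
  have hH0 : (1 : Matrix (Fin 2) (Fin 2) ℂ) - (-(2:ℂ) • 1) * -1 * ((1/2 : ℂ) • 1) = 0 := by
    ext i j; fin_cases i <;> fin_cases j <;> simp [Matrix.one_apply] <;> norm_num
  rw [hF0, hH0]
  refine ⟨rfl, by simp, rfl, by ext i j; fin_cases i <;> fin_cases j <;> simp [Matrix.one_apply] <;> norm_num, spec_eq, ?_, ?_, ?_⟩
  · intro μ hμ
    rcases (spec_aux μ).mp hμ with rfl | rfl <;> simp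
  · intro h
    have := h Complex.I ((spec_aux Complex.I).mpr (Or.inl rfl))
    simp at this
  · intro h
    have := h ![1, Complex.I] Complex.I ?_ ?_
    · exact absurd (congrFun this 0) (by norm_num)
    · ext i; fin_cases i <;>
        simp [Matrix.mulVec, dotProduct, Fin.sum_univ_two] <;> ring
    · simp
end
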